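/- arXiv:1103.4447 — 5 statements merged into one kernel-verified Lean document; each statement's English description precedes it below -/
import Mathlib

section
/- If V is a primary decomposable subspace of R = k[t] (i.e. V ≠ 0 and S(V) contains O(b) for some nonzero b ∈ R), then C(R,V) = {a ∈ R : aR ⊆ V} is a nonzero ideal of R, and consequently the quotient k-vector space R/V is finite-dimensional. -/
/-!
Since `b ∣ (b² r)'`, every `b² r` lies in `O(b) ⊆ S(V)`, so `b² v R ⊆ V` for any `v ∈ V`: taking
`v ≠ 0` gives a nonzero element of `C(R, V)`. In the PID `k[t]` a nonzero ideal has
finite codimension, and `R/V` is a quotient of `R/C(R, V)`.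
-/

open Polynomial

/-- The paper's `C(A, V)`: the largest ideal of `A` contained in `V`. -/
def Submodule.conductorIdeal {k A : Type*} [Semiring k] [CommSemiring A] [Module k A]
    (V : Submodule k A) : Ideal A where
  carrier := {a | ∀ r, a * r ∈ V}
  zero_mem' r := by simp
  add_mem' hx hy r := by simpa only [add_mul] using V.add_mem (hx r) (hy r)
  smul_mem' c x hx r := by simpa only [smul_eq_mul, mul_left_comm c x, mul_assoc] using hx (c * r)

theorem Submodule.conductorIdeal_le {k A : Type*} [CommSemiring k] [CommSemiring A] [Algebra k A]
    (V : Submodule k A) : V.conductorIdeal.restrictScalars k ≤ V :=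
  fun a ha => by simpa using ha 1

theorem Module.Finite.quotient_of_ideal_le {k A : Type*} [CommRing k] [CommRing A] [Algebra k A]
    {I : Ideal A} {V : Submodule k A} [Module.Finite k (A ⧸ I)]
    (h : I.restrictScalars k ≤ V) : Module.Finite k (A ⧸ V) :=
  have : Module.Finite k (A ⧸ I.restrictScalars k) :=
    .equiv (Submodule.Quotient.restrictScalarsEquiv k I).symm
  .of_surjective _ (Submodule.factor_surjective h)

namespace Polynomial

theorem finiteDimensional_quotient_of_ne_bot {k : Type*} [Field k] {I : Ideal k[X]}
    (hI : I ≠ ⊥) : FiniteDimensional k (k[X] ⧸ I) := by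
  have hg : Submodule.IsPrincipal.generator I ≠ 0 :=
    mt (Submodule.IsPrincipal.eq_bot_iff_generator_eq_zero I).mpr hI
  rw [← Submodule.IsPrincipal.span_singleton_generator I]
  exact .of_basis (AdjoinRoot.powerBasis hg).basis

variable {R k : Type*} [CommSemiring R] [Semiring k] [Module k R[X]] {V : Submodule k R[X]}

theorem sq_mul_mem_conductorIdeal {b v : R[X]}
    (hS : ∀ a : R[X], b ∣ derivative a → ∀ w ∈ V, a * w ∈ V) (hv : v ∈ V) :
    b ^ 2 * v ∈ V.conductorIdeal := by
  intro r
  have hO : b ∣ derivative (b ^ 2 * r) := by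
    simpa using pow_sub_one_dvd_derivative_of_pow_dvd (n := 2) (dvd_mul_right (b ^ 2) r)
  simpa only [mul_right_comm] using hS _ hO v hv

theorem conductorIdeal_ne_bot [NoZeroDivisors R] (hV : V ≠ ⊥) {b : R[X]} (hb : b ≠ 0)
    (hS : ∀ a : R[X], b ∣ derivative a → ∀ w ∈ V, a * w ∈ V) :
    V.conductorIdeal ≠ ⊥ := by
  obtain ⟨v, hvV, hv⟩ := Submodule.exists_mem_ne_zero_of_ne_bot hV
  exact (Submodule.ne_bot_iff _).mpr
    ⟨b ^ 2 * v, sq_mul_mem_conductorIdeal hS hvV, mul_ne_zero (pow_ne_zero 2 hb) hv⟩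

end Polynomial

theorem stmt5_general {k : Type} [Field k] (V : Submodule k (Polynomial k))
    (hV : V ≠ ⊥)
    (hpd : ∃ b : Polynomial k, b ≠ 0 ∧ ∀ a : Polynomial k,
        b ∣ derivative a → ∀ v ∈ V, a * v ∈ V) :
    (∃ J : Ideal (Polynomial k),
        (J : Set (Polynomial k)) = {a : Polynomial k | ∀ r : Polynomial k, a * r ∈ V} ∧
        J ≠ ⊥) ∧
    FiniteDimensional k (Polynomial k ⧸ V) := by
  obtain ⟨b, hb, hS⟩ := hpd
  have hC : V.conductorIdeal ≠ ⊥ := conductorIdeal_ne_bot hV hb hS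
  have := finiteDimensional_quotient_of_ne_bot hC
  exact ⟨⟨V.conductorIdeal, rfl, hC⟩, .quotient_of_ideal_le V.conductorIdeal_le⟩

/-- If `V` is a primary decomposable subspace of `k[t]` (i.e. `V ≠ 0` and
`O(b) ⊆ S(V)` for some `b ≠ 0`), then `C(R,V)` is a nonzero ideal of `k[t]`
and `k[t]/V` is a finite-dimensional `k`-vector space. -/
theorem stmt5 {k : Type} [Field k] [CharZero k] (V : Submodule k (Polynomial k))
    (hV : V ≠ ⊥)
    (hpd : ∃ b : Polynomial k, b ≠ 0 ∧ ∀ a : Polynomial k,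
        b ∣ derivative a → ∀ v ∈ V, a * v ∈ V) :
    (∃ J : Ideal (Polynomial k),
        (J : Set (Polynomial k)) = {a : Polynomial k | ∀ r : Polynomial k, a * r ∈ V} ∧
        J ≠ ⊥) ∧
    FiniteDimensional k (Polynomial k ⧸ V) :=
  stmt5_general V hV hpd
end

section
/- Let V be a primary decomposable subspace of R = k[t], let D(R,V) = {d ∈ k(t)[∂] : d(R) ⊆ V}, let p ∈ k[t], and let σ = exp(ad(p)). Then σ(D(R,V)) = D(R,V) if and only if p ∈ S(V) = {a ∈ R : aV ⊆ V}. -/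
open Polynomial

/-- Multiplication by `t` as a `k`-linear endomorphism of `k[t]`. -/
noncomputable def Tmul (k : Type) [Field k] : Module.End k (Polynomial k) :=
  Algebra.lmul k (Polynomial k) X

/-- The derivative `∂ = d/dt` as a `k`-linear endomorphism of `k[t]`. -/
noncomputable def Dop (k : Type) [Field k] : Module.End k (Polynomial k) :=
  Polynomial.derivative

/-- The first Weyl algebra `A₁ = k⟨t,∂⟩`, realized as the subalgebra of
`End_k(k[t])` generated by multiplication by `t` and the derivative. -/
noncomputable def WeylA (k : Type) [Field k] : Subalgebra k (Module.End k (Polynomial k)) :=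
  Algebra.adjoin k {Tmul k, Dop k}

/-- `ad(p) : d ↦ [d,p] = dp - pd`, as a `k`-linear endomorphism of `End_k(k[t])`. -/
noncomputable def adOp {k : Type} [Field k] (p : Module.End k (Polynomial k)) :
    Module.End k (Module.End k (Polynomial k)) :=
  LinearMap.mulRight k p - LinearMap.mulLeft k p

/-!
`p`, multiplication by `q`, commutes with `t` and `[∂, p] = q'`, so `ad p` is locally nilpotent
on `A₁`, and on each element `σ^m = exp(m · ad p)` for `m : ℕ` and `σ⁻¹ = exp(-ad p)`.

If `qV ⊆ V`, then `ad p` preserves the operators mapping `R` into `V`, hence so do `σ` and `σ⁻¹`.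

Conversely, if `σ` preserves `D = D(R,V)` and `d ∈ D`, then `m ↦ σ^m d = Σₙ mⁿ/n! (ad p)ⁿ d` is a
polynomial in `m` with values in `D`, so each of its coefficients lies in `D`; in particular
`(ad p d)(1) = d(q) - q d(1) ∈ V`, whence `q d(1) ∈ V`. This covers all of `V` as `D ⋆ 1 = V`: for
`m = deg b` the operator `E = Σᵢ (-1)ⁱ b^(m-i) ∂ⁱ` has `E(1) = m! lc(b) ≠ 0` and
`(E h)' = ±b h^(m+1)`, so `E(R) ⊆ O(b) ⊆ S(V)` and `v E / E(1) ∈ D` sends `1` to `v`.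
-/

open Finset
open scoped Nat

theorem Polynomial.X_pow_dvd_sub_trunc_coe {R : Type*} [CommRing R] (P : R[X]) (N : ℕ) :
    X ^ N ∣ P - PowerSeries.trunc N (P : PowerSeries R) := by
  rw [X_pow_dvd_iff]
  intro n hn
  rw [coeff_sub, PowerSeries.coeff_trunc, if_pos hn, coeff_coe, sub_self]

theorem Polynomial.iterate_derivative_natDegree {R : Type*} [Semiring R] (p : R[X]) :
    derivative^[p.natDegree] p = C (p.natDegree ! • p.leadingCoeff) := by
  ext n
  rw [coeff_iterate_derivative, coeff_C]
  rcases n with _ | n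
  · rw [zero_add, Nat.descFactorial_self, if_pos rfl]
    rfl
  · rw [coeff_eq_zero_of_natDegree_lt (by omega), smul_zero, if_neg n.succ_ne_zero]

theorem Polynomial.derivative_sum_alternating {R : Type*} [CommRing R] (f g : R[X]) (n : ℕ) :
    derivative (∑ i ∈ range (n + 1), (-1) ^ i * (derivative^[n - i] f * derivative^[i] g)) =
      derivative^[n + 1] f * g + (-1) ^ n * (f * derivative^[n + 1] g) := by
  induction n generalizing g with
  | zero => simp [derivative_mul]
  | succ n ih =>
    have hsplit : ∑ i ∈ range (n + 2), (-1) ^ i * (derivative^[n + 1 - i] f * derivative^[i] g) =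
        derivative^[n + 1] f * g - ∑ i ∈ range (n + 1),
          (-1) ^ i * (derivative^[n - i] f * derivative^[i] (derivative g)) := by
      rw [sum_range_succ', add_comm, sub_eq_add_neg, ← sum_neg_distrib]
      congr 1
      · simp
      · refine sum_congr rfl fun i _ => ?_
        rw [Nat.add_sub_add_right, Function.iterate_succ_apply, pow_succ]
        ring
    rw [hsplit, derivative_sub, ih, derivative_mul,
      ← Function.iterate_succ_apply' derivative (n + 1) f,
      Function.iterate_succ_apply derivative (n + 1) g]
    ring

theorem Submodule.mem_of_forall_sum_pow_smul_mem {k M : Type*} [Field k] [CharZero k]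
    [AddCommGroup M] [Module k M] (W : Submodule k M) {c : ℕ → M} {N : ℕ}
    (h : ∀ m : ℕ, ∑ n ∈ range N, ((m : k) ^ n) • c n ∈ W) {n : ℕ} (hn : n < N) : c n ∈ W := by
  rw [← Submodule.Quotient.mk_eq_zero, ← Module.forall_dual_apply_eq_zero_iff k]
  intro ℓ
  set P : k[X] := ∑ i ∈ range N, C (ℓ (W.mkQ (c i))) * X ^ i
  have hP : P = 0 := by
    refine eq_zero_of_infinite_isRoot P <|
      Set.infinite_of_injective_forall_mem Nat.cast_injective fun m => ?_
    have hm : ℓ (W.mkQ (∑ n ∈ range N, ((m : k) ^ n) • c n)) = 0 := by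
      rw [Submodule.mkQ_apply, (Submodule.Quotient.mk_eq_zero W).mpr (h m), map_zero]
    simp only [map_sum, map_smul, smul_eq_mul] at hm
    simp only [IsRoot.def, P, eval_finsetSum, eval_mul, eval_C, eval_pow, eval_X, ← hm]
    exact sum_congr rfl fun i _ => mul_comm _ _
  simpa [P, finsetSum_coeff, coeff_C_mul_X_pow, hn] using congr_arg (coeff · n) hP

section TruncExp

variable {k M : Type*} [AddCommGroup M]

theorem pow_apply_aeval_apply_eq_zero [CommRing k] [Module k M] {δ : Module.End k M} {N : ℕ}
    {g : M} (hg : (δ ^ N) g = 0) (P : k[X]) : (δ ^ N) (aeval δ P g) = 0 := by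
  rw [← Module.End.mul_apply, ← aeval_X_pow (R := k), ← map_mul, mul_comm, map_mul,
    Module.End.mul_apply, aeval_X_pow, hg, map_zero]

variable [Field k] [CharZero k] [Module k M]

noncomputable def truncExp (δ : Module.End k M) (N : ℕ) (a : k) : Module.End k M :=
  aeval δ (PowerSeries.trunc N (PowerSeries.rescale a (PowerSeries.exp k)))

variable {δ : Module.End k M} {N : ℕ}

theorem truncExp_apply (a : k) (g : M) :
    truncExp δ N a g = ∑ n ∈ range N, (a ^ n * (n ! : k)⁻¹) • (δ ^ n) g := by
  rw [truncExp, aeval_def, PowerSeries.eval₂_trunc_eq_sum_range, LinearMap.sum_apply]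
  refine sum_congr rfl fun n _ => ?_
  rw [Module.End.mul_apply, Module.algebraMap_end_apply, PowerSeries.coeff_rescale,
    PowerSeries.coeff_exp]
  simp

variable {g : M}

theorem truncExp_apply_truncExp_apply (hg : (δ ^ N) g = 0) (a b : k) :
    truncExp δ N a (truncExp δ N b g) = truncExp δ N (a + b) g := by
  set E : k → k[X] := fun a => PowerSeries.trunc N (PowerSeries.rescale a (PowerSeries.exp k))
  obtain ⟨S, hS⟩ : X ^ N ∣ E a * E b - E (a + b) := by
    simpa only [E, Polynomial.coe_mul, PowerSeries.trunc_trunc_mul_trunc,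
      PowerSeries.exp_mul_exp_eq_exp_add] using X_pow_dvd_sub_trunc_coe (E a * E b) N
  change aeval δ (E a) (aeval δ (E b) g) = aeval δ (E (a + b)) g
  rw [← Module.End.mul_apply, ← map_mul, sub_eq_iff_eq_add'.mp hS, map_add, LinearMap.add_apply,
    map_mul, aeval_X_pow, Module.End.mul_apply, pow_apply_aeval_apply_eq_zero hg, add_zero]

theorem truncExp_zero_apply (hg : (δ ^ N) g = 0) : truncExp δ N 0 g = g := by
  rw [truncExp_apply]
  cases N with
  | zero => simpa using hg.symm
  | succ N =>
    rw [sum_range_succ']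
    simp

end TruncExp

section Weyl

variable {k : Type} [Field k]

theorem adOp_apply (p d : Module.End k k[X]) : adOp p d = d * p - p * d := rfl

theorem adOp_mul (p d e : Module.End k k[X]) :
    adOp p (d * e) = d * adOp p e + adOp p d * e := by
  simp only [adOp_apply, mul_sub, sub_mul, mul_assoc]
  abel

theorem adOp_pow_add_apply_mul_eq_zero {p d e : Module.End k k[X]} {N M : ℕ}
    (hd : (adOp p ^ N) d = 0) (he : (adOp p ^ M) e = 0) : (adOp p ^ (N + M)) (d * e) = 0 := by
  induction N generalizing d M e with
  | zero => simp_all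
  | succ N ihN =>
    induction M generalizing e with
    | zero => simp_all
    | succ M ihM =>
      rw [pow_succ, Module.End.mul_apply] at hd he
      rw [← add_assoc, pow_succ, Module.End.mul_apply, adOp_mul, map_add, ihM he, zero_add,
        show N + 1 + M = N + (M + 1) by omega]
      exact ihN hd (by rwa [pow_succ, Module.End.mul_apply])

def adNilpotentSubalgebra (p : Module.End k k[X]) : Subalgebra k (Module.End k k[X]) where
  carrier := {d | ∃ N, (adOp p ^ N) d = 0}
  mul_mem' := fun ⟨N, hN⟩ ⟨M, hM⟩ => ⟨N + M, adOp_pow_add_apply_mul_eq_zero hN hM⟩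
  add_mem' := fun ⟨N, hN⟩ ⟨M, hM⟩ => ⟨N + M, by
    rw [map_add, Module.End.pow_map_zero_of_le (by omega) hN,
      Module.End.pow_map_zero_of_le (by omega) hM, add_zero]⟩
  algebraMap_mem' r := ⟨1, by simp [adOp_apply, Algebra.commutes]⟩

theorem lmul_eq_aeval_Tmul :
    (Algebra.lmul k k[X] : k[X] →ₐ[k] Module.End k k[X]) = aeval (Tmul k) :=
  algHom_ext (by simp [Tmul])

theorem lmul_mem_weylA (c : k[X]) : Algebra.lmul k k[X] c ∈ WeylA k := by
  rw [lmul_eq_aeval_Tmul]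
  exact Algebra.adjoin_mono (by simp) (aeval_mem_adjoin_singleton k (Tmul k))

theorem adOp_lmul_lmul (q c : k[X]) :
    adOp (Algebra.lmul k k[X] q) (Algebra.lmul k k[X] c) = 0 := by
  rw [adOp_apply, ← map_mul, ← map_mul, mul_comm, sub_self]

theorem adOp_lmul_Dop (q : k[X]) :
    adOp (Algebra.lmul k k[X] q) (Dop k) = Algebra.lmul k k[X] (derivative q) := by
  refine LinearMap.ext fun h => ?_
  simp [adOp_apply, Dop]

theorem weylA_le_adNilpotentSubalgebra (q : k[X]) :
    WeylA k ≤ adNilpotentSubalgebra (Algebra.lmul k k[X] q) := by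
  refine Algebra.adjoin_le ?_
  rintro _ (rfl | rfl)
  · exact ⟨1, adOp_lmul_lmul q X⟩
  · exact ⟨2, by rw [pow_two, Module.End.mul_apply, adOp_lmul_Dop, adOp_lmul_lmul]⟩

noncomputable def altDerivOp (b : k[X]) : Module.End k k[X] :=
  ∑ i ∈ range (b.natDegree + 1),
    Algebra.lmul k k[X] ((-1) ^ i * derivative^[b.natDegree - i] b) * Dop k ^ i

theorem altDerivOp_mem_weylA (b : k[X]) : altDerivOp b ∈ WeylA k :=
  Subalgebra.sum_mem _ fun i _ =>
    mul_mem (lmul_mem_weylA _) (pow_mem (Algebra.subset_adjoin (by simp)) i)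

theorem altDerivOp_apply (b h : k[X]) :
    altDerivOp b h = ∑ i ∈ range (b.natDegree + 1),
      (-1) ^ i * (derivative^[b.natDegree - i] b * derivative^[i] h) := by
  simp [altDerivOp, Module.End.pow_apply, Dop, mul_assoc]

theorem dvd_derivative_altDerivOp_apply (b h : k[X]) : b ∣ derivative (altDerivOp b h) := by
  rw [altDerivOp_apply, derivative_sum_alternating,
    iterate_derivative_eq_zero (Nat.lt_succ_self _), zero_mul, zero_add]
  exact (dvd_mul_right b _).mul_left _

theorem altDerivOp_apply_one (b : k[X]) :
    altDerivOp b 1 = C (b.natDegree ! • b.leadingCoeff) := by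
  rw [altDerivOp_apply, sum_range_succ', ← iterate_derivative_natDegree]
  simp

end Weyl

section MapsInto

variable {k : Type} [Field k] {V : Submodule k k[X]} {q : k[X]}

def weylMapsInto (V : Submodule k k[X]) : Set (WeylA k) :=
  {d | ∀ h : k[X], (d : Module.End k k[X]) h ∈ V}

theorem adOp_lmul_apply_mem (hq : ∀ v ∈ V, q * v ∈ V) {f : Module.End k k[X]}
    (hf : ∀ h, f h ∈ V) (h : k[X]) : adOp (Algebra.lmul k k[X] q) f h ∈ V := by
  simpa [adOp_apply] using sub_mem (hf (q * h)) (hq _ (hf h))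

theorem aeval_adOp_lmul_apply_mem (hq : ∀ v ∈ V, q * v ∈ V) {f : Module.End k k[X]}
    (hf : ∀ h, f h ∈ V) (P : k[X]) (h : k[X]) :
    aeval (adOp (Algebra.lmul k k[X] q)) P f h ∈ V := by
  have hpow : ∀ n (h : k[X]), (adOp (Algebra.lmul k k[X] q) ^ n) f h ∈ V := by
    intro n
    induction n with
    | zero => exact hf
    | succ n ih => simpa only [pow_succ', Module.End.mul_apply] using adOp_lmul_apply_mem hq ih
  induction P using Polynomial.induction_on' with
  | add P Q hP hQ => simpa using add_mem hP hQ
  | monomial n a => simpa [aeval_monomial] using V.smul_mem a (hpow n h)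

theorem mul_apply_one_mem {f : Module.End k k[X]} (hf : ∀ h, f h ∈ V)
    (had : ∀ h, adOp (Algebra.lmul k k[X] q) f h ∈ V) : q * f 1 ∈ V := by
  simpa [adOp_apply] using sub_mem (hf q) (had 1)

theorem exists_mem_weylMapsInto_apply_one_eq [CharZero k] {b : k[X]} (hb : b ≠ 0)
    (hbV : ∀ a : k[X], b ∣ derivative a → ∀ v ∈ V, a * v ∈ V) {v : k[X]} (hv : v ∈ V) :
    ∃ d ∈ weylMapsInto V, (d : Module.End k k[X]) 1 = v := by
  set c : k := b.natDegree ! • b.leadingCoeff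
  have hc : c ≠ 0 := smul_ne_zero (Nat.factorial_ne_zero _) (leadingCoeff_ne_zero.mpr hb)
  refine ⟨⟨Algebra.lmul k k[X] (C c⁻¹ * v) * altDerivOp b,
    mul_mem (lmul_mem_weylA _) (altDerivOp_mem_weylA b)⟩, fun h => ?_, ?_⟩
  · change C c⁻¹ * v * altDerivOp b h ∈ V
    convert V.smul_mem c⁻¹ (hbV _ (dvd_derivative_altDerivOp_apply b h) v hv) using 1
    rw [smul_eq_C_mul]
    ring
  · change C c⁻¹ * v * altDerivOp b 1 = v
    rw [altDerivOp_apply_one, mul_right_comm, ← C_mul, inv_mul_cancel₀ hc, C_1, one_mul]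

end MapsInto

section ExpAd

variable {k : Type} [Field k] [CharZero k]

def IsExpAd (p : Module.End k k[X]) (σ : WeylA k ≃ₐ[k] WeylA k) : Prop :=
  ∀ (d : WeylA k) (N : ℕ), (adOp p ^ N) (d : Module.End k k[X]) = 0 →
    (σ d : Module.End k k[X]) =
      ∑ n ∈ range N, ((n ! : k)⁻¹ • (adOp p ^ n) (d : Module.End k k[X]))

namespace IsExpAd

variable {p : Module.End k k[X]} {σ : WeylA k ≃ₐ[k] WeylA k} {d : WeylA k} {N : ℕ}

theorem apply_eq (hσ : IsExpAd p σ) (hd : (adOp p ^ N) (d : Module.End k k[X]) = 0) :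
    (σ d : Module.End k k[X]) = truncExp (adOp p) N 1 d := by
  simp [hσ d N hd, truncExp_apply]

theorem iterate_apply_eq (hσ : IsExpAd p σ) (hd : (adOp p ^ N) (d : Module.End k k[X]) = 0)
    (m : ℕ) : ((σ^[m] d : WeylA k) : Module.End k k[X]) = truncExp (adOp p) N m d := by
  induction m with
  | zero => simp [truncExp_zero_apply hd]
  | succ m ih =>
    rw [Function.iterate_succ_apply',
      hσ.apply_eq (by rw [ih]; exact pow_apply_aeval_apply_eq_zero hd _), ih,
      truncExp_apply_truncExp_apply hd, add_comm, Nat.cast_succ]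

theorem symm_apply_eq (hσ : IsExpAd p σ)
    (hd : (adOp p ^ N) ((σ.symm d : WeylA k) : Module.End k k[X]) = 0) :
    ((σ.symm d : WeylA k) : Module.End k k[X]) = truncExp (adOp p) N (-1) d := by
  rw [← σ.apply_symm_apply d, hσ.apply_eq hd, truncExp_apply_truncExp_apply hd, neg_add_cancel,
    truncExp_zero_apply hd, σ.apply_symm_apply]

variable {V : Submodule k k[X]}

theorem adOp_apply_mem_of_iterate_mem (hσ : IsExpAd p σ)
    (hd : (adOp p ^ N) (d : Module.End k k[X]) = 0) (hV : ∀ m, σ^[m] d ∈ weylMapsInto V)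
    (h : k[X]) : adOp p d h ∈ V := by
  have hd' : (adOp p ^ (N + 2)) (d : Module.End k k[X]) = 0 :=
    Module.End.pow_map_zero_of_le (by omega) hd
  have := V.mem_of_forall_sum_pow_smul_mem (c := fun n => (n ! : k)⁻¹ • (adOp p ^ n) d h)
    (fun m => by simpa [hσ.iterate_apply_eq hd' m, truncExp_apply, mul_smul] using hV m h)
    (n := 1) (by omega)
  simpa using this

theorem image_weylMapsInto_eq {q : k[X]} (hσ : IsExpAd (Algebra.lmul k k[X] q) σ)
    (hq : ∀ v ∈ V, q * v ∈ V) : σ '' weylMapsInto V = weylMapsInto V := by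
  have hnil (d : WeylA k) := weylA_le_adNilpotentSubalgebra q d.2
  refine Set.Subset.antisymm ?_ fun d hd => ⟨σ.symm d, fun h => ?_, σ.apply_symm_apply d⟩
  · rintro _ ⟨d, hd, rfl⟩ h
    obtain ⟨N, hN⟩ := hnil d
    rw [hσ.apply_eq hN]
    exact aeval_adOp_lmul_apply_mem hq hd _ h
  · obtain ⟨N, hN⟩ := hnil (σ.symm d)
    rw [hσ.symm_apply_eq hN]
    exact aeval_adOp_lmul_apply_mem hq hd _ h

end IsExpAd

end ExpAd

theorem stmt7_general {k : Type} [Field k] [CharZero k] (V : Submodule k (Polynomial k))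
    (hpd : ∃ b : Polynomial k, b ≠ 0 ∧ ∀ a : Polynomial k,
        b ∣ derivative a → ∀ v ∈ V, a * v ∈ V)
    (q : Polynomial k) (p : Module.End k (Polynomial k))
    (hp : p = Algebra.lmul k (Polynomial k) q)
    (σ : WeylA k ≃ₐ[k] WeylA k)
    (hσ : ∀ (d : WeylA k) (N : ℕ),
        (adOp p ^ N) (d : Module.End k (Polynomial k)) = 0 →
        (σ d : Module.End k (Polynomial k)) =
          ∑ n ∈ Finset.range N,
            ((n.factorial : k)⁻¹ • (adOp p ^ n) (d : Module.End k (Polynomial k)))) :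
    σ '' {d : WeylA k | ∀ h : Polynomial k, (d : Module.End k (Polynomial k)) h ∈ V}
        = {d : WeylA k | ∀ h : Polynomial k, (d : Module.End k (Polynomial k)) h ∈ V}
      ↔ ∀ v ∈ V, q * v ∈ V := by
  change σ '' weylMapsInto V = weylMapsInto V ↔ _
  subst hp
  replace hσ : IsExpAd _ σ := hσ
  obtain ⟨b, hb, hbV⟩ := hpd
  refine ⟨fun hD v hv => ?_, hσ.image_weylMapsInto_eq⟩
  obtain ⟨d, hd, rfl⟩ := exists_mem_weylMapsInto_apply_one_eq hb hbV hv
  have hmaps : Set.MapsTo σ (weylMapsInto V) (weylMapsInto V) := fun d hd =>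
    hD ▸ Set.mem_image_of_mem σ hd
  obtain ⟨N, hN⟩ := weylA_le_adNilpotentSubalgebra q d.2
  exact mul_apply_one_mem hd (hσ.adOp_apply_mem_of_iterate_mem hN fun m => hmaps.iterate m hd)

/-- Let `V` be a primary decomposable subspace of `R = k[t]`,
`D(R,V) = {d ∈ A₁ : d(R) ⊆ V}`, `p ∈ k[t]` and `σ = exp(ad p)`.
Then `σ(D(R,V)) = D(R,V)` if and only if `p ∈ S(V)`, i.e. `pV ⊆ V`. -/
theorem stmt7 {k : Type} [Field k] [CharZero k] (V : Submodule k (Polynomial k))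
    (hV : V ≠ ⊥)
    (hpd : ∃ b : Polynomial k, b ≠ 0 ∧ ∀ a : Polynomial k,
        b ∣ derivative a → ∀ v ∈ V, a * v ∈ V)
    (q : Polynomial k) (p : Module.End k (Polynomial k))
    (hp : p = Algebra.lmul k (Polynomial k) q)
    (σ : WeylA k ≃ₐ[k] WeylA k)
    (hσ : ∀ (d : WeylA k) (N : ℕ),
        (adOp p ^ N) (d : Module.End k (Polynomial k)) = 0 →
        (σ d : Module.End k (Polynomial k)) =
          ∑ n ∈ Finset.range N,
            ((n.factorial : k)⁻¹ • (adOp p ^ n) (d : Module.End k (Polynomial k)))) :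
    σ '' {d : WeylA k | ∀ h : Polynomial k, (d : Module.End k (Polynomial k)) h ∈ V}
        = {d : WeylA k | ∀ h : Polynomial k, (d : Module.End k (Polynomial k)) h ∈ V}
      ↔ ∀ v ∈ V, q * v ∈ V :=
  stmt7_general V hpd q p hp σ hσ
end

section
/- Let V be a primary decomposable irreducible subspace of R = k[t] (p.d. and not contained in a proper ideal of R) and m = dim_k R/V. Then every nonzero d ∈ D(R,V) satisfies deg_t(d) ≥ m, where deg_t is the degree of d written as a polynomial in t with coefficients in k(∂) (equivalently the t-degree in k(∂)[t]). -/
/-!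
Write `d = Σ c(i,l) tⁱ ∂ˡ` and let `ε` be the largest weight `i - l` with `c(i,l) ≠ 0`.
Since `tⁱ ∂ˡ tⁿ = n(n-1)⋯(n-l+1) t^(n+i-l)`, the polynomial `d(t^(j-ε))` has degree at most
`j`, and its coefficient of `t^j` is `(j-ε)!/j!` times `Q(j)`, where
`Q = Σ_{i-l=ε} c(i,l) x(x-1)⋯(x-i+1)` is the indicial polynomial of `d`. So the image of `d`
contains a polynomial of exact degree `j` for every `j ∈ ℕ` except the natural roots of `Q`, of
which there are at most `deg Q ≤ deg_t d`; hence any `V ⊇ d(R)` has codimension at most `deg_t d`.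
-/

open Polynomial

open Module
open scoped Nat

theorem Nat.factorial_mul_descFactorial_eq_of_add_eq {n i j l : ℕ} (h : n + i = j + l) :
    n ! * j.descFactorial i = j ! * n.descFactorial l := by
  by_cases hij : i ≤ j
  · have hj := Nat.factorial_mul_descFactorial hij
    have hn := Nat.factorial_mul_descFactorial (show l ≤ n by omega)
    rw [show n - l = j - i by omega] at hn
    rw [← hj, ← hn]
    ring
  · rw [Nat.descFactorial_eq_zero_iff_lt.2 (by omega),
      Nat.descFactorial_eq_zero_iff_lt.2 (by omega), mul_zero, mul_zero]

theorem Polynomial.finrank_quotient_le_card_of_exists_natDegree_eq {k : Type*} [Field k]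
    (V : Submodule k k[X]) (S : Finset ℕ) (hV : ∀ j ∉ S, ∃ q ∈ V, q.natDegree = j ∧ q ≠ 0) :
    finrank k (k[X] ⧸ V) ≤ S.card := by
  classical
  choose! q hqV hqdeg hq0 using hV
  let s : Sequence k :=
    ⟨fun j => if j ∈ S then X ^ j else q j, fun j => by
      split_ifs with hj
      · simp
      · rw [degree_eq_natDegree (hq0 j hj), hqdeg j hj]⟩
  let T : Finset k[X] := S.image (X ^ ·)
  have hsup : V ⊔ Submodule.span k (T : Set k[X]) = ⊤ := by
    have hs := s.span fun j => (leadingCoeff_ne_zero.2 (s.ne_zero j)).isUnit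
    refine eq_top_iff.2 (hs.ge.trans (Submodule.span_le.2 ?_))
    rintro _ ⟨j, rfl⟩
    by_cases hj : j ∈ S
    · refine Submodule.mem_sup_right (Submodule.subset_span ?_)
      simpa [s, T, hj] using ⟨j, hj, rfl⟩
    · simpa [s, hj] using Submodule.mem_sup_left (hqV j hj)
  have hspan : Submodule.span k ((T.image V.mkQ : Finset _) : Set (k[X] ⧸ V)) = ⊤ := by
    rw [Finset.coe_image, ← Submodule.map_span, Submodule.map_mkQ_eq_top]
    exact hsup
  calc finrank k (k[X] ⧸ V) ≤ (T.image V.mkQ).card := by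
        have h := finrank_span_finset_le_card (R := k) (T.image V.mkQ)
        rwa [Set.finrank, hspan, finrank_top] at h
    _ ≤ S.card := Finset.card_image_le.trans Finset.card_image_le

noncomputable def normalOrdered (k : Type) [Field k] : (ℕ × ℕ →₀ k) →ₗ[k] Module.End k k[X] :=
  Finsupp.linearCombination k fun p => Tmul k ^ p.1 * Dop k ^ p.2

section NormalOrdered

variable {k : Type} [Field k]

theorem tmul_pow_mul_dop_pow_apply_X_pow (i l n : ℕ) :
    (Tmul k ^ i * Dop k ^ l) (X ^ n) = C (n.descFactorial l : k) * X ^ (i + (n - l)) := by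
  have hT : Tmul k ^ i = Algebra.lmul k k[X] (X ^ i) := by rw [Tmul, map_pow]
  rw [Module.End.mul_apply, hT, Module.End.pow_apply, Dop]
  simp [iterate_derivative_X_pow_eq_smul, pow_add, smul_eq_C_mul]
  ring

theorem coeff_normalOrdered_apply_X_pow (c : ℕ × ℕ →₀ k) (n j : ℕ) :
    (normalOrdered k c (X ^ n)).coeff j =
      ∑ p ∈ c.support, if j = p.1 + (n - p.2) then c p * n.descFactorial p.2 else 0 := by
  rw [normalOrdered, Finsupp.linearCombination_apply, Finsupp.sum, LinearMap.sum_apply,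
    finsetSum_coeff]
  refine Finset.sum_congr rfl fun p _ => ?_
  rw [LinearMap.smul_apply, tmul_pow_mul_dop_pow_apply_X_pow, coeff_smul, coeff_C_mul_X_pow]
  split_ifs <;> simp

theorem tmul_pow_mul_aeval_dop (i : ℕ) (a : k[X]) :
    Tmul k ^ i * aeval (Dop k) a =
      normalOrdered k (∑ l ∈ a.support, Finsupp.single (i, l) (a.coeff l)) := by
  rw [aeval_def, eval₂_eq_sum, sum_def, Finset.mul_sum, map_sum]
  refine Finset.sum_congr rfl fun l _ => ?_
  rw [normalOrdered, Finsupp.linearCombination_single, ← Algebra.smul_def, mul_smul_comm]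

end NormalOrdered

section IndicialPolynomial

variable {k : Type} [Field k] (c : ℕ × ℕ →₀ k) (hc : c.support.Nonempty)

def topWeight : ℤ := c.support.sup' hc fun p => (p.1 : ℤ) - p.2

noncomputable def indicialPoly : k[X] :=
  ∑ p ∈ c.support with (p.1 : ℤ) - p.2 = topWeight c hc, C (c p) * descPochhammer k p.1

theorem coeff_normalOrdered_apply_X_pow_eq_zero {n j : ℕ} (h : (n : ℤ) + topWeight c hc < j) :
    (normalOrdered k c (X ^ n)).coeff j = 0 := by
  rw [coeff_normalOrdered_apply_X_pow]
  refine Finset.sum_eq_zero fun p hp => ?_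
  have hweight : (p.1 : ℤ) - p.2 ≤ topWeight c hc :=
    Finset.le_sup' (fun p => (p.1 : ℤ) - p.2) hp
  split_ifs with hj
  · rw [Nat.descFactorial_eq_zero_iff_lt.2 (by omega), Nat.cast_zero, mul_zero]
  · rfl

theorem factorial_mul_coeff_normalOrdered_apply_X_pow {n j : ℕ}
    (h : (n : ℤ) + topWeight c hc = j) :
    (j ! : k) * (normalOrdered k c (X ^ n)).coeff j = n ! * (indicialPoly c hc).eval (j : k) := by
  rw [coeff_normalOrdered_apply_X_pow, indicialPoly, eval_finsetSum, Finset.mul_sum,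
    Finset.mul_sum, Finset.sum_filter]
  refine Finset.sum_congr rfl fun p _ => ?_
  rw [eval_mul, eval_C, descPochhammer_eval_eq_descFactorial]
  by_cases hpn : p.2 ≤ n
  · have hj : j = p.1 + (n - p.2) ↔ (p.1 : ℤ) - p.2 = topWeight c hc := by omega
    rw [if_congr hj rfl rfl]
    split_ifs with hweight
    · have key := Nat.factorial_mul_descFactorial_eq_of_add_eq (show n + p.1 = j + p.2 by omega)
      have key' := congrArg (Nat.cast : ℕ → k) key
      push_cast at key'
      linear_combination (c p) * key'.symm
    · simp
  · have hdesc : n.descFactorial p.2 = 0 := Nat.descFactorial_eq_zero_iff_lt.2 (by omega)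
    split_ifs with hj hweight hweight
    · rw [Nat.descFactorial_eq_zero_iff_lt.2 (show j < p.1 by omega)]
      simp [hdesc]
    · simp [hdesc]
    · rw [Nat.descFactorial_eq_zero_iff_lt.2 (show j < p.1 by omega)]
      simp
    · simp

theorem eval_indicialPoly_eq_zero_of_lt {j : ℕ} (h : (j : ℤ) < topWeight c hc) :
    (indicialPoly c hc).eval (j : k) = 0 := by
  rw [indicialPoly, eval_finsetSum]
  refine Finset.sum_eq_zero fun p hp => ?_
  have hweight := (Finset.mem_filter.1 hp).2
  rw [eval_mul, descPochhammer_eval_eq_descFactorial,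
    Nat.descFactorial_eq_zero_iff_lt.2 (by omega), Nat.cast_zero, mul_zero]

theorem exists_natDegree_normalOrdered_apply_X_pow_eq [CharZero k] {j : ℕ}
    (hj : (indicialPoly c hc).eval (j : k) ≠ 0) :
    ∃ n, normalOrdered k c (X ^ n) ≠ 0 ∧ (normalOrdered k c (X ^ n)).natDegree = j := by
  have hle : topWeight c hc ≤ j := not_lt.1 (mt (eval_indicialPoly_eq_zero_of_lt c hc) hj)
  obtain ⟨n, hn⟩ : ∃ n : ℕ, (n : ℤ) + topWeight c hc = j :=
    ⟨(j - topWeight c hc).toNat, by omega⟩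
  have hcoeff : (normalOrdered k c (X ^ n)).coeff j ≠ 0 := by
    intro h0
    have key := factorial_mul_coeff_normalOrdered_apply_X_pow c hc hn
    rw [h0, mul_zero, eq_comm, mul_eq_zero] at key
    exact key.elim (Nat.cast_ne_zero.2 n.factorial_ne_zero) hj
  have hdeg : (normalOrdered k c (X ^ n)).natDegree ≤ j :=
    natDegree_le_iff_coeff_eq_zero.2 fun i hi =>
      coeff_normalOrdered_apply_X_pow_eq_zero c hc (by omega)
  exact ⟨n, fun h => hcoeff (by rw [h, coeff_zero]),
    natDegree_eq_of_le_of_coeff_ne_zero hdeg hcoeff⟩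

theorem exists_mem_support_natDegree_indicialPoly :
    ∃ p ∈ c.support,
      (indicialPoly c hc).natDegree = p.1 ∧ (indicialPoly c hc).leadingCoeff = c p := by
  set D := c.support.filter fun p => (p.1 : ℤ) - p.2 = topWeight c hc
  have hD : D.Nonempty := by
    obtain ⟨p, hp, hmax⟩ := Finset.exists_mem_eq_sup' hc fun p => (p.1 : ℤ) - p.2
    exact ⟨p, Finset.mem_filter.2 ⟨hp, hmax.symm⟩⟩
  obtain ⟨p, hpD, hpmax⟩ := Finset.exists_max_image D Prod.fst hD
  have hpD' := Finset.mem_filter.1 hpD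
  have hdeg : (indicialPoly c hc).natDegree ≤ p.1 :=
    natDegree_sum_le_of_forall_le _ _ fun q hq =>
      natDegree_C_mul_le _ _ |>.trans ((descPochhammer_natDegree k q.1).trans_le (hpmax q hq))
  have hcoeff : (indicialPoly c hc).coeff p.1 = c p := by
    rw [indicialPoly, finsetSum_coeff, Finset.sum_eq_single_of_mem p hpD]
    · have hmonic := (monic_descPochhammer k p.1).coeff_natDegree
      rw [descPochhammer_natDegree] at hmonic
      rw [coeff_C_mul, hmonic, mul_one]
    · intro q hqD hqp
      have hq := (Finset.mem_filter.1 hqD).2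
      have hlt : q.1 < p.1 := (hpmax q hqD).lt_of_ne fun h => hqp (Prod.ext h (by omega))
      rw [coeff_C_mul,
        coeff_eq_zero_of_natDegree_lt ((descPochhammer_natDegree k q.1).trans_lt hlt), mul_zero]
  have hnat :=
    natDegree_eq_of_le_of_coeff_ne_zero hdeg (hcoeff ▸ Finsupp.mem_support_iff.1 hpD'.1)
  exact ⟨p, hpD'.1, hnat, by rw [leadingCoeff, hnat, hcoeff]⟩

end IndicialPolynomial

theorem exists_mem_support_finrank_quotient_le {k : Type} [Field k] [CharZero k]
    (c : ℕ × ℕ →₀ k) (hc : c.support.Nonempty) (V : Submodule k k[X])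
    (hV : ∀ f, normalOrdered k c f ∈ V) :
    ∃ p ∈ c.support, finrank k (k[X] ⧸ V) ≤ p.1 := by
  classical
  obtain ⟨p, hp, hdeg, hlc⟩ := exists_mem_support_natDegree_indicialPoly c hc
  set Q := indicialPoly c hc
  have hQ : Q ≠ 0 := leadingCoeff_ne_zero.1 (hlc ▸ Finsupp.mem_support_iff.1 hp)
  let S : Finset ℕ := Q.roots.toFinset.preimage Nat.cast Nat.cast_injective.injOn
  refine ⟨p, hp, (finrank_quotient_le_card_of_exists_natDegree_eq V S fun j hj => ?_).trans ?_⟩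
  · obtain ⟨n, hn0, hn⟩ := exists_natDegree_normalOrdered_apply_X_pow_eq c hc (j := j)
      (by simpa [S, hQ] using hj)
    exact ⟨_, hV _, hn, hn0⟩
  · calc S.card = (S.image (Nat.cast : ℕ → k)).card :=
          (Finset.card_image_of_injective _ Nat.cast_injective).symm
      _ ≤ Q.natDegree := card_le_degree_of_subset_roots fun x hx => by
          obtain ⟨n, hn, rfl⟩ := Finset.mem_image.1 hx
          simpa [S] using hn
      _ = p.1 := hdeg

theorem stmt13_general {k : Type} [Field k] [CharZero k] (V : Submodule k (Polynomial k))
    (d : Module.End k (Polynomial k)) (hd0 : d ≠ 0)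
    (hdV : ∀ h : Polynomial k, d h ∈ V) :
    ¬ ∃ a : ℕ → Polynomial k,
        d = ∑ i ∈ Finset.range (Module.finrank k (Polynomial k ⧸ V)),
              Tmul k ^ i * Polynomial.aeval (Dop k) (a i) := by
  classical
  rintro ⟨a, hda⟩
  set c : ℕ × ℕ →₀ k := ∑ i ∈ Finset.range (finrank k (k[X] ⧸ V)),
    ∑ l ∈ (a i).support, Finsupp.single (i, l) ((a i).coeff l)
  have hdc : d = normalOrdered k c := by simp only [hda, c, map_sum, tmul_pow_mul_aeval_dop]
  have hc : c.support.Nonempty :=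
    Finsupp.support_nonempty_iff.2 fun h => hd0 (by rw [hdc, h, map_zero])
  obtain ⟨p, hp, hle⟩ := exists_mem_support_finrank_quotient_le c hc V (hdc ▸ hdV)
  obtain ⟨i, hi, hpi⟩ := Finset.mem_biUnion.1 (Finsupp.support_finsetSum hp)
  obtain ⟨l, -, hpl⟩ := Finset.mem_biUnion.1 (Finsupp.support_finsetSum hpi)
  rw [Finset.mem_singleton.1 (Finsupp.support_single_subset hpl)] at hle
  exact (Finset.mem_range.1 hi).not_ge hle

/-- If `V` is a p.d.i. subspace of `R = k[t]` with `m = dim_k R/V`, then every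
nonzero `d ∈ D(R,V)` has `t`-degree at least `m`: `d` admits no expression
`d = Σ_{i<m} tⁱ aᵢ(∂)` with `aᵢ ∈ k[∂]`. -/
theorem stmt13 {k : Type} [Field k] [CharZero k] (V : Submodule k (Polynomial k))
    (hV : V ≠ ⊥)
    (hpd : ∃ b : Polynomial k, b ≠ 0 ∧ ∀ a : Polynomial k,
        b ∣ derivative a → ∀ v ∈ V, a * v ∈ V)
    (hirr : ∀ J : Ideal (Polynomial k), (V : Set (Polynomial k)) ⊆ J → J = ⊤)
    (d : Module.End k (Polynomial k)) (hdW : d ∈ WeylA k) (hd0 : d ≠ 0)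
    (hdV : ∀ h : Polynomial k, d h ∈ V) :
    ¬ ∃ a : ℕ → Polynomial k,
        d = ∑ i ∈ Finset.range (Module.finrank k (Polynomial k ⧸ V)),
              Tmul k ^ i * Polynomial.aeval (Dop k) (a i) :=
  stmt13_general V d hd0 hdV
end

section
/- Let V be a p.d.i. subspace of R = k[t] and f ∈ D(R,V) a nonzero element of minimal t-degree. Then f(R) = V, i.e. the image of k[t] under the differential operator f is exactly V. -/
open Polynomial

/-!
Write the operators of `A₁` as `Σ tⁱ aᵢ(∂)` and filter them by `t`-degree. If `f` has `t`-degree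
`m` and leading coefficient `α(∂)`, every `d ∈ A₁` can be divided by `f` after a right factor:
`d γ(∂) = f q + r` with `γ ≠ 0` and `r` of `t`-degree `< m` (multiply by `α(∂)` to cancel the
top term against `f tʲ`, and repeat).

Given `v ∈ V`, let `c = ∂⁻¹ b ∂^{N+1}` (rescaled so that `c 1 = 1`), which lies in `A₁` by
repeated integration by parts and has `b ∣ (c h)'`; since `V` is stable under multiplication by
such polynomials, `d = v · c ∈ D(R,V)`. Then `r = d γ(∂) - f q ∈ D(R,V)` has `t`-degree below that
of `f`, so `r = 0` by minimality, and for `w` with `γ(∂) w = 1` we get `f (q w) = d 1 = v`.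
-/

namespace WeylA

noncomputable def tDegreeLT (k : Type) [Field k] (n : ℕ) : Submodule k (Module.End k k[X]) :=
  Submodule.span k {d | ∃ i < n, ∃ γ : k[X], Tmul k ^ i * aeval (Dop k) γ = d}

variable {k : Type} [Field k] {m n : ℕ} {d f : Module.End k k[X]} {α : k[X]}

theorem Tmul_mem : Tmul k ∈ WeylA k := Algebra.subset_adjoin (by simp)

theorem Dop_mem : Dop k ∈ WeylA k := Algebra.subset_adjoin (by simp)

theorem aeval_Dop_mem (γ : k[X]) : aeval (Dop k) γ ∈ WeylA k :=
  Algebra.adjoin_mono (by simp) (aeval_mem_adjoin_singleton k (Dop k))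

theorem lmul_mem (p : k[X]) : Algebra.lmul k k[X] p ∈ WeylA k := by
  have hT : aeval (Tmul k) p = Algebra.lmul k k[X] p := by
    simpa [Tmul] using aeval_algHom_apply (Algebra.lmul k k[X]) X p
  exact hT ▸ Algebra.adjoin_mono (by simp) (aeval_mem_adjoin_singleton k (Tmul k))

theorem Dop_mul_Tmul : Dop k * Tmul k = Tmul k * Dop k + 1 := by
  refine LinearMap.ext fun p => ?_
  simp [Dop, Tmul, add_comm]

theorem aeval_Dop_mul_Tmul (γ : k[X]) :
    aeval (Dop k) γ * Tmul k = Tmul k * aeval (Dop k) γ + aeval (Dop k) (derivative γ) := by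
  induction γ using Polynomial.induction_on with
  | C a => simp [Algebra.commutes]
  | add p q hp hq =>
    simp only [map_add, add_mul, mul_add, hp, hq]
    abel
  | monomial n a ih =>
    rw [pow_succ, ← mul_assoc]
    generalize C a * X ^ n = p at ih ⊢
    rw [map_mul, aeval_X, mul_assoc, Dop_mul_Tmul, mul_add, mul_one, ← mul_assoc, ih,
      derivative_mul, derivative_X, map_add, map_mul, map_mul, aeval_X,
      map_one, mul_one, add_mul, mul_assoc, add_assoc]

theorem Tpow_mul_aeval_mem_tDegreeLT {i : ℕ} (hi : i < n) (γ : k[X]) :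
    Tmul k ^ i * aeval (Dop k) γ ∈ tDegreeLT k n :=
  Submodule.subset_span ⟨i, hi, γ, rfl⟩

theorem tDegreeLT_mono : Monotone (tDegreeLT k) := fun _ _ h =>
  Submodule.span_mono fun _ ⟨i, hi, γ, hγ⟩ => ⟨i, hi.trans_le h, γ, hγ⟩

theorem tDegreeLT_zero : tDegreeLT k 0 = ⊥ := by
  simp [tDegreeLT]

theorem mem_tDegreeLT_iff : d ∈ tDegreeLT k n ↔
    ∃ a : ℕ → k[X], d = ∑ i ∈ Finset.range n, Tmul k ^ i * aeval (Dop k) (a i) := by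
  refine ⟨fun hd => ?_, ?_⟩
  · induction hd using Submodule.span_induction with
    | mem x hx =>
      obtain ⟨i, hi, γ, rfl⟩ := hx
      refine ⟨Pi.single i γ, ?_⟩
      rw [Finset.sum_eq_single_of_mem i (Finset.mem_range.2 hi) fun j _ hj => by simp [hj],
        Pi.single_eq_same]
    | zero => exact ⟨0, by simp⟩
    | add x y _ _ hx hy =>
      obtain ⟨a, rfl⟩ := hx
      obtain ⟨b, rfl⟩ := hy
      exact ⟨a + b, by simp [mul_add, Finset.sum_add_distrib]⟩
    | smul c x _ hx =>
      obtain ⟨a, rfl⟩ := hx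
      exact ⟨c • a, by simp [Finset.smul_sum]⟩
  · rintro ⟨a, rfl⟩
    exact Submodule.sum_mem _ fun i hi => Tpow_mul_aeval_mem_tDegreeLT (Finset.mem_range.1 hi) _

theorem tDegreeLT_le_weylA : tDegreeLT k n ≤ Subalgebra.toSubmodule (WeylA k) :=
  Submodule.span_le.2 fun _ ⟨i, _, γ, hγ⟩ =>
    hγ ▸ (mul_mem (pow_mem Tmul_mem i) (aeval_Dop_mem γ) : _ ∈ WeylA k)

theorem mul_aeval_mem_tDegreeLT (hd : d ∈ tDegreeLT k n) (γ : k[X]) :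
    d * aeval (Dop k) γ ∈ tDegreeLT k n := by
  refine (Submodule.span_le (p := (tDegreeLT k n).comap
    (LinearMap.mulRight k (aeval (Dop k) γ)))).2 ?_ hd
  rintro _ ⟨i, hi, δ, rfl⟩
  simpa [mul_assoc] using Tpow_mul_aeval_mem_tDegreeLT hi (δ * γ)

theorem Tpow_mul_mem_tDegreeLT (hd : d ∈ tDegreeLT k n) (j : ℕ) :
    Tmul k ^ j * d ∈ tDegreeLT k (j + n) := by
  refine (Submodule.span_le (p := (tDegreeLT k (j + n)).comap
    (LinearMap.mulLeft k (Tmul k ^ j)))).2 ?_ hd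
  rintro _ ⟨i, hi, δ, rfl⟩
  simpa [← mul_assoc, ← pow_add] using
    Tpow_mul_aeval_mem_tDegreeLT (by omega : j + i < j + n) δ

theorem mul_Tmul_mem_tDegreeLT (hd : d ∈ tDegreeLT k n) : d * Tmul k ∈ tDegreeLT k (n + 1) := by
  refine (Submodule.span_le (p := (tDegreeLT k (n + 1)).comap
    (LinearMap.mulRight k (Tmul k)))).2 ?_ hd
  rintro _ ⟨i, hi, δ, rfl⟩
  have hcomm : Tmul k ^ i * aeval (Dop k) δ * Tmul k =
      Tmul k ^ (i + 1) * aeval (Dop k) δ + Tmul k ^ i * aeval (Dop k) (derivative δ) := by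
    rw [mul_assoc, aeval_Dop_mul_Tmul, mul_add, ← mul_assoc, ← pow_succ]
  rw [SetLike.mem_coe, Submodule.mem_comap, LinearMap.mulRight_apply, hcomm]
  exact add_mem (Tpow_mul_aeval_mem_tDegreeLT (by omega) _)
    (Tpow_mul_aeval_mem_tDegreeLT (by omega) _)

theorem mul_Tpow_mem_tDegreeLT (hd : d ∈ tDegreeLT k n) (j : ℕ) :
    d * Tmul k ^ j ∈ tDegreeLT k (n + j) := by
  induction j with
  | zero => simpa using hd
  | succ j ih => simpa [pow_succ, ← mul_assoc, ← add_assoc] using mul_Tmul_mem_tDegreeLT ih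

theorem mul_mem_tDegreeLT_add {e : Module.End k k[X]} (hd : d ∈ tDegreeLT k m)
    (he : e ∈ tDegreeLT k n) : d * e ∈ tDegreeLT k (m + n) := by
  suffices tDegreeLT k m * tDegreeLT k n ≤ tDegreeLT k (m + n) from
    this (Submodule.mul_mem_mul hd he)
  rw [tDegreeLT, tDegreeLT, Submodule.span_mul_span, Submodule.span_le]
  rintro _ ⟨_, ⟨i, hi, γ, rfl⟩, _, ⟨j, hj, δ, rfl⟩, rfl⟩
  have h := Tpow_mul_mem_tDegreeLT (mul_aeval_mem_tDegreeLT (mul_Tpow_mem_tDegreeLT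
    (Tpow_mul_aeval_mem_tDegreeLT zero_lt_one γ) j) δ) i
  rw [pow_zero, one_mul] at h
  exact tDegreeLT_mono (show i + (1 + j) ≤ m + n by omega) (by simpa only [mul_assoc] using h)

theorem exists_mem_tDegreeLT_of_mem_weylA (hd : d ∈ WeylA k) : ∃ n, d ∈ tDegreeLT k n := by
  induction hd using Algebra.adjoin_induction with
  | mem x hx =>
    rcases hx with rfl | rfl
    · exact ⟨2, by simpa [Tmul] using Tpow_mul_aeval_mem_tDegreeLT one_lt_two (1 : k[X])⟩
    · exact ⟨1, by simpa [Dop] using Tpow_mul_aeval_mem_tDegreeLT zero_lt_one (X : k[X])⟩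
  | algebraMap c => exact ⟨1, by simpa using Tpow_mul_aeval_mem_tDegreeLT zero_lt_one (C c)⟩
  | add x y _ _ hx hy =>
    obtain ⟨m, hm⟩ := hx
    obtain ⟨n, hn⟩ := hy
    exact ⟨max m n, add_mem (tDegreeLT_mono (le_max_left m n) hm)
      (tDegreeLT_mono (le_max_right m n) hn)⟩
  | mul x y _ _ hx hy =>
    obtain ⟨m, hm⟩ := hx
    obtain ⟨n, hn⟩ := hy
    exact ⟨m + n, mul_mem_tDegreeLT_add hm hn⟩

theorem exists_sub_Tpow_mul_aeval_mem_tDegreeLT (hd : d ∈ tDegreeLT k (n + 1)) :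
    ∃ γ : k[X], d - Tmul k ^ n * aeval (Dop k) γ ∈ tDegreeLT k n := by
  induction hd using Submodule.span_induction with
  | mem x hx =>
    obtain ⟨i, hi, δ, rfl⟩ := hx
    rcases (Nat.lt_succ_iff.1 hi).lt_or_eq with hi | rfl
    · exact ⟨0, by simpa using Tpow_mul_aeval_mem_tDegreeLT hi δ⟩
    · exact ⟨δ, by simp⟩
  | zero => exact ⟨0, by simp⟩
  | add x y _ _ hx hy =>
    obtain ⟨γ, hγ⟩ := hx
    obtain ⟨δ, hδ⟩ := hy
    exact ⟨γ + δ, by simpa [mul_add, add_sub_add_comm] using add_mem hγ hδ⟩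
  | smul c x _ hx =>
    obtain ⟨γ, hγ⟩ := hx
    exact ⟨c • γ, by simpa [smul_sub] using Submodule.smul_mem _ c hγ⟩

theorem exists_leading_term_of_mem_weylA (hf : f ∈ WeylA k) (hf0 : f ≠ 0) :
    ∃ (m : ℕ) (α : k[X]), α ≠ 0 ∧ f ∉ tDegreeLT k m ∧
      f - Tmul k ^ m * aeval (Dop k) α ∈ tDegreeLT k m := by
  classical
  have hex : ∃ n, f ∈ tDegreeLT k n := exists_mem_tDegreeLT_of_mem_weylA hf
  obtain ⟨m, hm⟩ : ∃ m, Nat.find hex = m + 1 := Nat.exists_eq_succ_of_ne_zero fun h =>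
    hf0 (by simpa [h, tDegreeLT_zero] using Nat.find_spec hex)
  have hfm : f ∉ tDegreeLT k m := Nat.find_min hex (by omega)
  obtain ⟨α, hα⟩ := exists_sub_Tpow_mul_aeval_mem_tDegreeLT (hm ▸ Nat.find_spec hex)
  refine ⟨m, α, ?_, hfm, hα⟩
  rintro rfl
  exact hfm (by simpa using hα)

theorem aeval_Dop_mul_Tpow_sub_mem_tDegreeLT (γ : k[X]) (j : ℕ) :
    aeval (Dop k) γ * Tmul k ^ j - Tmul k ^ j * aeval (Dop k) γ ∈ tDegreeLT k j := by
  induction j with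
  | zero => simp
  | succ j ih =>
    have hcomm : aeval (Dop k) γ * Tmul k ^ (j + 1) - Tmul k ^ (j + 1) * aeval (Dop k) γ =
        (aeval (Dop k) γ * Tmul k ^ j - Tmul k ^ j * aeval (Dop k) γ) * Tmul k +
          Tmul k ^ j * aeval (Dop k) (derivative γ) := by
      rw [sub_mul, mul_assoc (Tmul k ^ j), aeval_Dop_mul_Tmul, pow_succ]
      noncomm_ring
    rw [hcomm]
    exact add_mem (mul_Tmul_mem_tDegreeLT ih) (Tpow_mul_aeval_mem_tDegreeLT j.lt_succ_self _)

theorem mul_Tpow_mul_aeval_sub_mem_tDegreeLT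
    (hf : f - Tmul k ^ m * aeval (Dop k) α ∈ tDegreeLT k m) (j : ℕ) (β : k[X]) :
    f * (Tmul k ^ j * aeval (Dop k) β) - Tmul k ^ (m + j) * aeval (Dop k) (α * β) ∈
      tDegreeLT k (m + j) := by
  have hlow := mul_aeval_mem_tDegreeLT (mul_Tpow_mem_tDegreeLT hf j) β
  have hcomm := mul_aeval_mem_tDegreeLT
    (Tpow_mul_mem_tDegreeLT (aeval_Dop_mul_Tpow_sub_mem_tDegreeLT α j) m) β
  convert add_mem hlow hcomm using 1
  simp only [map_mul, pow_add, mul_sub, sub_mul, mul_assoc]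
  abel

theorem exists_mul_aeval_sub_mul_mem_tDegreeLT (hα : α ≠ 0)
    (hf : f - Tmul k ^ m * aeval (Dop k) α ∈ tDegreeLT k m) (hd : d ∈ tDegreeLT k n) :
    ∃ γ : k[X], γ ≠ 0 ∧
      ∃ q : Module.End k k[X], d * aeval (Dop k) γ - f * q ∈ tDegreeLT k m := by
  induction n generalizing d with
  | zero =>
    rw [tDegreeLT_zero, Submodule.mem_bot] at hd
    exact ⟨1, one_ne_zero, 0, by simp [hd]⟩
  | succ M ih =>
    by_cases hM : M < m
    · exact ⟨1, one_ne_zero, 0, by simpa using tDegreeLT_mono hM hd⟩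
    obtain ⟨j, rfl⟩ : ∃ j, M = m + j := ⟨M - m, by omega⟩
    obtain ⟨δ, hδ⟩ := exists_sub_Tpow_mul_aeval_mem_tDegreeLT hd
    have hd' : d * aeval (Dop k) α - f * (Tmul k ^ j * aeval (Dop k) δ) ∈
        tDegreeLT k (m + j) := by
      convert sub_mem (mul_aeval_mem_tDegreeLT hδ α)
        (mul_Tpow_mul_aeval_sub_mem_tDegreeLT hf j δ) using 1
      simp only [mul_comm α δ, map_mul, sub_mul, mul_assoc]
      abel
    obtain ⟨γ, hγ, q, hq⟩ := ih hd'
    refine ⟨α * γ, mul_ne_zero hα hγ, Tmul k ^ j * aeval (Dop k) δ * aeval (Dop k) γ + q, ?_⟩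
    convert hq using 1
    simp only [map_mul, mul_add, sub_mul, mul_assoc]
    abel

theorem aeval_Dop_apply_C (δ : k[X]) (c : k) : aeval (Dop k) δ (C c) = C (δ.coeff 0 * c) := by
  nth_rewrite 1 [← divX_mul_X_add δ]
  simp [Dop]

theorem exists_aeval_Dop_apply_eq_one [CharZero k] {γ : k[X]} (hγ : γ ≠ 0) :
    ∃ w : k[X], aeval (Dop k) γ w = 1 := by
  obtain ⟨δ, hγδ, hδ⟩ := γ.exists_eq_pow_rootMultiplicity_mul_and_not_dvd hγ 0
  set r := γ.rootMultiplicity 0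
  have hδ0 : δ.coeff 0 ≠ 0 := by simpa [X_dvd_iff] using hδ
  have hX : aeval (Dop k) γ (X ^ r) = C (δ.coeff 0 * r.factorial) := by
    have hr : (Dop k ^ r) (X ^ r) = C (r.factorial : k) := by
      simp only [Module.End.pow_apply, Dop, iterate_derivative_X_pow_eq_C_mul,
        Nat.descFactorial_self, Nat.sub_self, pow_zero, mul_one]
    rw [hγδ, C_0, sub_zero, mul_comm, map_mul, Module.End.mul_apply, aeval_X_pow, hr,
      aeval_Dop_apply_C]
  refine ⟨(δ.coeff 0 * r.factorial)⁻¹ • X ^ r, ?_⟩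
  have hκ : δ.coeff 0 * r.factorial ≠ 0 := mul_ne_zero hδ0 (Nat.cast_ne_zero.2 r.factorial_ne_zero)
  rw [map_smul, hX, smul_C, smul_eq_mul, inv_mul_cancel₀ hκ, C_1]

-- `∂⁻¹ ∘ b ∘ ∂^{N+1}` with `N = deg b`, expanded by integration by parts so that it lies in `A₁`.
noncomputable def antiderivOp (b : k[X]) : Module.End k k[X] :=
  ∑ j ∈ Finset.range (b.natDegree + 1),
    (-1 : k) ^ j • (Algebra.lmul k k[X] (derivative^[j] b) * Dop k ^ (b.natDegree - j))

theorem antiderivOp_apply (b h : k[X]) :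
    antiderivOp b h = ∑ j ∈ Finset.range (b.natDegree + 1),
      (-1 : k) ^ j • (derivative^[j] b * derivative^[b.natDegree - j] h) := by
  simp [antiderivOp, Dop, Module.End.pow_apply]

theorem antiderivOp_mem (b : k[X]) : antiderivOp b ∈ WeylA k :=
  Subalgebra.sum_mem _ fun _ _ =>
    Subalgebra.smul_mem _ (mul_mem (lmul_mem _) (pow_mem Dop_mem _)) _

theorem derivative_antiderivOp_apply (b h : k[X]) :
    derivative (antiderivOp b h) = b * derivative^[b.natDegree + 1] h := by
  set N := b.natDegree
  set g : ℕ → k[X] := fun j => (-1 : k) ^ j • (derivative^[j] b * derivative^[N + 1 - j] h)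
  have hterm : ∀ j ∈ Finset.range (N + 1),
      derivative ((-1 : k) ^ j • (derivative^[j] b * derivative^[N - j] h)) = g j - g (j + 1) := by
    intro j hj
    have hNj : N + 1 - j = N - j + 1 := by
      have := Finset.mem_range.1 hj
      omega
    simp only [g, derivative_smul, derivative_mul, hNj, Nat.add_sub_add_right, pow_succ,
      ← Function.iterate_succ_apply' derivative]
    module
  rw [antiderivOp_apply, map_sum, Finset.sum_congr rfl hterm, Finset.sum_range_sub']
  simp [g, iterate_derivative_eq_zero (Nat.lt_succ_self N)]

theorem antiderivOp_one (b : k[X]) :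
    antiderivOp b 1 = C ((-1) ^ b.natDegree * b.natDegree.factorial * b.leadingCoeff) := by
  set N := b.natDegree
  have htop : derivative^[N] b = C (N.factorial * b.leadingCoeff) := by
    rw [eq_C_of_natDegree_le_zero ((natDegree_iterate_derivative b N).trans_eq N.sub_self),
      coeff_iterate_derivative, zero_add, Nat.descFactorial_self, nsmul_eq_mul]
    rfl
  rw [antiderivOp_apply, Finset.sum_eq_single_of_mem N (Finset.self_mem_range_succ N)
    fun j hj hjN => by
      rw [iterate_derivative_eq_zero (p := (1 : k[X])) (by simp at hj ⊢; omega), mul_zero,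
        smul_zero]]
  rw [Nat.sub_self, Function.iterate_zero_apply, mul_one, htop, smul_C, smul_eq_mul, mul_assoc]

theorem exists_mem_weylA_apply_one_eq_one_and_dvd_derivative [CharZero k] {b : k[X]}
    (hb : b ≠ 0) : ∃ c ∈ WeylA k, c 1 = 1 ∧ ∀ h, b ∣ derivative (c h) := by
  set μ : k := (-1) ^ b.natDegree * b.natDegree.factorial * b.leadingCoeff
  have hμ : μ ≠ 0 := by simp [μ, hb, Nat.factorial_ne_zero]
  refine ⟨μ⁻¹ • antiderivOp b, Subalgebra.smul_mem _ (antiderivOp_mem b) _, ?_, fun h => ?_⟩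
  · rw [LinearMap.smul_apply, antiderivOp_one, smul_C, smul_eq_mul, inv_mul_cancel₀ hμ, C_1]
  · rw [LinearMap.smul_apply, derivative_smul, derivative_antiderivOp_apply, smul_eq_C_mul]
    exact dvd_mul_of_dvd_right (dvd_mul_right b _) _

end WeylA

open WeylA

theorem stmt14_general {k : Type} [Field k] [CharZero k] (V : Submodule k (Polynomial k))
    (hpd : ∃ b : Polynomial k, b ≠ 0 ∧ ∀ a : Polynomial k,
        b ∣ derivative a → ∀ v ∈ V, a * v ∈ V)
    (f : Module.End k (Polynomial k)) (hfW : f ∈ WeylA k) (hf0 : f ≠ 0)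
    (hfV : ∀ h : Polynomial k, f h ∈ V)
    (hmin : ∀ (d : Module.End k (Polynomial k)), d ∈ WeylA k → d ≠ 0 →
        (∀ h : Polynomial k, d h ∈ V) → ∀ m : ℕ,
        (∃ a : ℕ → Polynomial k,
            d = ∑ i ∈ Finset.range (m + 1), Tmul k ^ i * Polynomial.aeval (Dop k) (a i)) →
        ∃ a : ℕ → Polynomial k,
            f = ∑ i ∈ Finset.range (m + 1), Tmul k ^ i * Polynomial.aeval (Dop k) (a i)) :
    Set.range (fun h : Polynomial k => f h) = (V : Set (Polynomial k)) := by
  obtain ⟨b, hb0, hbV⟩ := hpd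
  obtain ⟨m, α, hα0, hfm, hα⟩ := exists_leading_term_of_mem_weylA hfW hf0
  have hlow : ∀ r ∈ tDegreeLT k m, (∀ h, r h ∈ V) → r = 0 := by
    intro r hr hrV
    by_contra hr0
    obtain ⟨m', rfl⟩ : ∃ m', m = m' + 1 := Nat.exists_eq_succ_of_ne_zero fun h => hr0 (by
      simpa [h, tDegreeLT_zero] using hr)
    exact hfm (mem_tDegreeLT_iff.2
      (hmin r (tDegreeLT_le_weylA hr) hr0 hrV m' (mem_tDegreeLT_iff.1 hr)))
  refine Set.Subset.antisymm (Set.range_subset_iff.2 hfV) fun v hv => ?_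
  obtain ⟨c, hcW, hc1, hcb⟩ := exists_mem_weylA_apply_one_eq_one_and_dvd_derivative hb0
  set d := Algebra.lmul k k[X] v * c
  have hdV : ∀ h, d h ∈ V := fun h => by simpa [d, mul_comm] using hbV _ (hcb h) v hv
  obtain ⟨n, hd⟩ := exists_mem_tDegreeLT_of_mem_weylA (mul_mem (lmul_mem v) hcW)
  obtain ⟨γ, hγ, q, hr⟩ := exists_mul_aeval_sub_mul_mem_tDegreeLT hα0 hα hd
  have hdq : d * aeval (Dop k) γ = f * q :=
    sub_eq_zero.1 (hlow _ hr fun h => by simpa using sub_mem (hdV _) (hfV (q h)))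
  obtain ⟨w, hw⟩ := exists_aeval_Dop_apply_eq_one hγ
  refine ⟨q w, ?_⟩
  simpa [d, hw, hc1] using (LinearMap.congr_fun hdq w).symm

/-- If `V` is a p.d.i. subspace of `R = k[t]` and `f ∈ D(R,V)` is a nonzero
element of minimal `t`-degree (whenever some nonzero element of `D(R,V)` can be
written `Σ_{i ≤ m} tⁱ aᵢ(∂)`, so can `f`), then `f(R) = V`. -/
theorem stmt14 {k : Type} [Field k] [CharZero k] (V : Submodule k (Polynomial k))
    (hV : V ≠ ⊥)
    (hpd : ∃ b : Polynomial k, b ≠ 0 ∧ ∀ a : Polynomial k,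
        b ∣ derivative a → ∀ v ∈ V, a * v ∈ V)
    (hirr : ∀ J : Ideal (Polynomial k), (V : Set (Polynomial k)) ⊆ J → J = ⊤)
    (f : Module.End k (Polynomial k)) (hfW : f ∈ WeylA k) (hf0 : f ≠ 0)
    (hfV : ∀ h : Polynomial k, f h ∈ V)
    (hmin : ∀ (d : Module.End k (Polynomial k)), d ∈ WeylA k → d ≠ 0 →
        (∀ h : Polynomial k, d h ∈ V) → ∀ m : ℕ,
        (∃ a : ℕ → Polynomial k,
            d = ∑ i ∈ Finset.range (m + 1), Tmul k ^ i * Polynomial.aeval (Dop k) (a i)) →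
        ∃ a : ℕ → Polynomial k,
            f = ∑ i ∈ Finset.range (m + 1), Tmul k ^ i * Polynomial.aeval (Dop k) (a i)) :
    Set.range (fun h : Polynomial k => f h) = (V : Set (Polynomial k)) :=
  stmt14_general V hpd f hfW hf0 hfV hmin
end

section
/- Let n ≥ 2 and Uₙ = k·(1 - t^{n-1}) + tⁿk[t] ⊆ k[t]. Then the elements e*_{Uₙ} = ∂^{n-2}t^{-n}(t∂) + (-1)ⁿ(n-1)! t^{1-n} and f_{Uₙ} = (t∂-1)···(t∂-(n-1)) + (-1)ⁿ(n-1)! t^{n-1} satisfy e*_{Uₙ} · f_{Uₙ} = (∂^{n-1} + (-1)ⁿ(n-1)!)² in k[t,t⁻¹]⟨∂⟩. -/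
/-!
Write `θ = t∂`. From `θt = t(θ + 1)` and `∂ᵏθ = (θ + k)∂ᵏ` one gets by induction
`(θ - 1)⋯(θ - k) · t = tᵏ⁺¹∂ᵏ`, i.e. `(θ - 1)⋯(θ - (n-1)) = tⁿ∂ⁿ⁻¹t⁻¹`. Being a polynomial in `θ`,
this factor commutes with `θ`, so the leading term of `e* · f` is `∂ⁿ⁻²t⁻ⁿ · tⁿ∂ⁿ = ∂²⁽ⁿ⁻¹⁾`.
With `c = (-1)ⁿ(n-1)!`, the two cross terms are `c(∂ⁿ⁻¹ ± (n-1)∂ⁿ⁻²t⁻¹)`, which add up to the cross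
term `2c∂ⁿ⁻¹` of the square, and the last term is `c²`.
-/

open Polynomial

theorem add_smul_mul_add_smul_eq_sq {R A : Type*} [CommSemiring R] [Ring A] [Algebra R A]
    (c : R) {E F u v P Q : A} (hEF : E * F = P * P) (hEv : E * v = P + Q)
    (huF : u * F = P - Q) (huv : u * v = 1) :
    (E + c • u) * (F + c • v) = (P + algebraMap R A c) ^ 2 := by
  calc (E + c • u) * (F + c • v)
        = E * F + c • (E * v) + c • (u * F) + (c * c) • (u * v) := by
        simp only [add_mul, mul_add, smul_mul_assoc, mul_smul_comm, smul_add, smul_smul]; abel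
    _ = P * P + c • P + c • P + (c * c) • 1 := by
        rw [hEF, hEv, huF, huv, smul_add, smul_sub]; abel
    _ = (P + algebraMap R A c) ^ 2 := by
        simp only [sq, Algebra.algebraMap_eq_smul_one, add_mul, mul_add, smul_mul_assoc,
          mul_smul_comm, one_mul, mul_one, smul_add, smul_smul]
        abel

namespace Weyl

variable {R A : Type*} [CommRing R] [Ring A] [Algebra R A] {t tinv D : A}

theorem euler_mul (h : D * t - t * D = 1) : t * D * t = t * (t * D + 1) := by
  rw [mul_assoc, ← h]; noncomm_ring

theorem pow_mul_euler (h : D * t - t * D = 1) (k : ℕ) :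
    D ^ k * (t * D) = t * D * D ^ k + k • D ^ k := by
  induction k with
  | zero => simp
  | succ k ih =>
    rw [pow_succ', mul_assoc, ih, mul_add, ← mul_assoc, ← mul_assoc, sub_eq_iff_eq_add'.mp h,
      mul_smul_comm, succ_nsmul]
    noncomm_ring

theorem aeval_prod_Icc_euler_mul (h : D * t - t * D = 1) (k : ℕ) :
    aeval (t * D) (∏ j ∈ Finset.Icc 1 k, (X - C (j : R))) * t = t ^ (k + 1) * D ^ k := by
  induction k with
  | zero => simp
  | succ k ih =>
    have hshift : (t * D - (k + 1 : ℕ) • 1) * t = t * (t * D - k • 1) := by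
      rw [sub_mul, smul_mul_assoc, one_mul, euler_mul h, mul_sub, mul_smul_comm, mul_one, mul_add,
        mul_one, succ_nsmul]
      abel
    rw [Finset.prod_Icc_succ_top (by omega), map_mul, mul_assoc, map_sub, aeval_X, aeval_C,
      map_natCast, ← nsmul_one, hshift, ← mul_assoc, ih, mul_assoc, mul_sub, pow_mul_euler h,
      mul_smul_comm, mul_one, add_sub_cancel_right, pow_succ' D, pow_succ t (k + 1), mul_assoc,
      mul_assoc]

theorem inv_pow_mul_mul_pow (h : D * t - t * D = 1) (hinv : tinv * t = 1) (k : ℕ) :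
    tinv ^ k * D * t ^ k = D + k • tinv := by
  induction k with
  | zero => simp
  | succ k ih =>
    calc tinv ^ (k + 1) * D * t ^ (k + 1) = tinv * (tinv ^ k * D * t ^ k) * t := by
          simp only [pow_succ', ← pow_mul_comm' t k, mul_assoc]
      _ = tinv * (D * t) + k • tinv * (tinv * t) := by
          rw [ih]; noncomm_ring
      _ = D + (k + 1) • tinv := by
          rw [sub_eq_iff_eq_add'.mp h, hinv, mul_add, ← mul_assoc, hinv, succ_nsmul]; noncomm_ring

theorem inv_pow_mul_euler_mul_aeval_prod_Icc (h : D * t - t * D = 1) (hinv : tinv * t = 1)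
    (k : ℕ) :
    tinv ^ (k + 1) * (t * D * aeval (t * D) (∏ j ∈ Finset.Icc 1 k, (X - C (j : R))))
      = D ^ (k + 1) := by
  have hcomm : Commute (t * D) (aeval (t * D) (∏ j ∈ Finset.Icc 1 k, (X - C (j : R)))) := by
    simpa using (commute_X _).map (aeval (t * D))
  rw [hcomm.eq, ← mul_assoc (aeval _ _), aeval_prod_Icc_euler_mul h, ← mul_assoc, ← mul_assoc,
    pow_mul_pow_eq_one _ hinv, one_mul, pow_succ]

theorem inv_pow_mul_aeval_prod_Icc_succ (h : D * t - t * D = 1) (ht : t * tinv = 1)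
    (hinv : tinv * t = 1) (k : ℕ) :
    tinv ^ (k + 1) * aeval (t * D) (∏ j ∈ Finset.Icc 1 (k + 1), (X - C (j : R)))
      = D ^ (k + 1) - D ^ k * ((k + 1) • tinv) := by
  have hF : aeval (t * D) (∏ j ∈ Finset.Icc 1 k, (X - C (j : R)))
      = t ^ (k + 1) * D ^ k * tinv := by
    rw [← aeval_prod_Icc_euler_mul (R := R) h, mul_assoc, ht, mul_one]
  rw [Finset.prod_Icc_succ_top (by omega), map_mul, hF, map_sub, aeval_X, aeval_C, map_natCast,
    ← nsmul_one]
  calc tinv ^ (k + 1) * (t ^ (k + 1) * D ^ k * tinv * (t * D - (k + 1) • 1))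
      = (tinv ^ (k + 1) * t ^ (k + 1)) * D ^ k * ((tinv * t) * D - (k + 1) • tinv) := by
        simp only [mul_sub, mul_smul_comm, mul_one, mul_assoc]
    _ = D ^ (k + 1) - D ^ k * ((k + 1) • tinv) := by
        rw [pow_mul_pow_eq_one _ hinv, hinv, one_mul, one_mul, mul_sub, pow_succ]

end Weyl

theorem stmt15_general {k A : Type} [Field k] [Ring A] [Algebra k A]
    (t tinv D : A) (h1 : D * t - t * D = 1) (h2 : t * tinv = 1) (h3 : tinv * t = 1)
    (n : ℕ) (hn : 2 ≤ n) :
    (D ^ (n - 2) * (tinv ^ n * (t * D))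
          + ((-1 : k) ^ n * (n - 1).factorial) • tinv ^ (n - 1)) *
        (aeval (t * D) (∏ j ∈ Finset.Icc 1 (n - 1), (X - C (j : k)))
          + ((-1 : k) ^ n * (n - 1).factorial) • t ^ (n - 1))
      = (D ^ (n - 1) + algebraMap k A ((-1) ^ n * (n - 1).factorial)) ^ 2 := by
  obtain ⟨m, rfl⟩ : ∃ m, n = m + 2 := ⟨n - 2, by omega⟩
  simp only [Nat.add_sub_cancel, show m + 2 - 1 = m + 1 from rfl]
  refine add_smul_mul_add_smul_eq_sq _ (P := D ^ (m + 1)) (Q := D ^ m * ((m + 1) • tinv))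
    ?_ ?_ (Weyl.inv_pow_mul_aeval_prod_Icc_succ h1 h2 h3 m) (pow_mul_pow_eq_one _ h3)
  · rw [mul_assoc, mul_assoc (tinv ^ _), Weyl.inv_pow_mul_euler_mul_aeval_prod_Icc h1 h3,
      ← pow_add, ← pow_add]
    congr 1; omega
  · rw [mul_assoc, pow_succ tinv, mul_assoc _ tinv, ← mul_assoc tinv, h3, one_mul,
      Weyl.inv_pow_mul_mul_pow h1 h3, mul_add, pow_succ]

/-- In the localized Weyl algebra `k[t,t⁻¹]⟨∂⟩`, for `n ≥ 2` and
`Uₙ = k(1 - t^{n-1}) + tⁿk[t]`, the characteristic elements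
`e*_{Uₙ} = ∂^{n-2}t^{-n}(t∂) + (-1)ⁿ(n-1)!·t^{1-n}` and
`f_{Uₙ} = (t∂-1)⋯(t∂-(n-1)) + (-1)ⁿ(n-1)!·t^{n-1}` satisfy
`e*_{Uₙ}·f_{Uₙ} = (∂^{n-1} + (-1)ⁿ(n-1)!)²`. -/
theorem stmt15 {k A : Type} [Field k] [CharZero k] [Ring A] [Algebra k A]
    (t tinv D : A) (h1 : D * t - t * D = 1) (h2 : t * tinv = 1) (h3 : tinv * t = 1)
    (n : ℕ) (hn : 2 ≤ n) :
    (D ^ (n - 2) * (tinv ^ n * (t * D))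
          + ((-1 : k) ^ n * (n - 1).factorial) • tinv ^ (n - 1)) *
        (aeval (t * D) (∏ j ∈ Finset.Icc 1 (n - 1), (X - C (j : k)))
          + ((-1 : k) ^ n * (n - 1).factorial) • t ^ (n - 1))
      = (D ^ (n - 1) + algebraMap k A ((-1) ^ n * (n - 1).factorial)) ^ 2 :=
  stmt15_general t tinv D h1 h2 h3 n hn
end
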